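/- arXiv:1711.00710 — 3 statements merged into one kernel-verified Lean document; each statement's English description precedes it below -/
import Mathlib

section
/- Let m be a primitive vector of a rank-n lattice M (n ≥ 2), P = M/ℤm, and π : M_ℝ → P_ℝ the induced projection. For any polytopes Q_1,…,Q_{n−1} in M_ℝ, the mixed volume of the segment from 0 to m with the Q_i equals the mixed volume of the projections: MV_M(seg(0,m), Q_1,…,Q_{n−1}) = MV_P(π(Q_1),…,π(Q_{n−1})). -/
/-!
Since `m` is primitive, Bézout gives a linear form `λ` that is integral on `ℤ^{n+2}` with
`λ m = 1`. The map `x ↦ (λ x, π x)` then sends `ℤ^{n+2}` onto `ℤ × ℤ^{n+1}`, so it is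
unimodular and preserves volume, and it sends `seg(0,m)` to `[0,1] × {0}`. Cavalieri's principle
gives `vol([0,1] × {0} + K) = vol K + vol(pr₂ K)` for compact convex `K`, hence
`vol(seg(0,m) + K) = vol K + vol(π K)`. In the inclusion–exclusion formula for the mixed volume,
the summands without the segment cancel against the `vol K` parts of those with it, and what
remains is the inclusion–exclusion formula for the projections.
-/

open scoped BigOperators Pointwise
open MeasureTheory

/-- The mixed volume of `d` convex bodies, normalized so `MV(Q,…,Q) = d! · μ(Q)`. -/
noncomputable def mixedVol {d : ℕ} (μ : Measure (Fin d → ℝ))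
    (Q : Fin d → Set (Fin d → ℝ)) : ℝ :=
  ∑ S ∈ Finset.univ.powerset.erase (∅ : Finset (Fin d)),
    (-1 : ℝ) ^ (d - S.card) * (μ (∑ i ∈ S, Q i)).toReal

/-- A point of `ℝ^d` lying in the standard lattice `ℤ^d`. -/
def IsLatticePt {d : ℕ} (x : Fin d → ℝ) : Prop := ∀ i, ∃ z : ℤ, x i = (z : ℝ)

open Set

theorem exists_sum_mul_eq_one_of_primitive {ι : Type*} [Fintype ι] (m : ι → ℤ)
    (hprim : ∀ (k : ℕ) (m' : ι → ℤ), 2 ≤ k → m ≠ (k : ℤ) • m') :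
    ∃ u : ι → ℤ, ∑ i, u i * m i = 1 := by
  obtain ⟨g, hg⟩ : ∃ g, Ideal.span (range m) = Ideal.span {g} :=
    ⟨_, (Submodule.IsPrincipal.span_singleton_generator _).symm⟩
  have hdvd : ∀ i, g ∣ m i := fun i =>
    Ideal.mem_span_singleton.mp (hg ▸ Ideal.subset_span (mem_range_self i))
  choose c hc using hdvd
  have hunit : IsUnit g := by
    rw [Int.isUnit_iff_natAbs_eq]
    rcases (by omega : g.natAbs = 0 ∨ g.natAbs = 1 ∨ 2 ≤ g.natAbs) with h0 | h1 | h2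
    · refine absurd ?_ (hprim 2 0 le_rfl)
      funext i
      simp [hc i, Int.natAbs_eq_zero.mp h0]
    · exact h1
    · refine absurd ?_ (hprim _ (fun i => g.sign * c i) h2)
      funext i
      rw [Pi.smul_apply, smul_eq_mul, ← mul_assoc, mul_comm _ g.sign, Int.sign_mul_natAbs, hc i]
  have h1 : (1 : ℤ) ∈ Ideal.span (range m) := by
    rw [hg, Ideal.span_singleton_eq_top.mpr hunit]
    trivial
  obtain ⟨u, hu⟩ := (Submodule.mem_span_range_iff_exists_fun ℤ).mp h1
  exact ⟨u, by simpa using hu⟩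

theorem exists_linearMap_eq_one_of_primitive {d : ℕ} (m : Fin d → ℤ)
    (hprim : ∀ (k : ℕ) (m' : Fin d → ℤ), 2 ≤ k → m ≠ (k : ℤ) • m') :
    ∃ lam : (Fin d → ℝ) →ₗ[ℝ] ℝ, lam (fun i => (m i : ℝ)) = 1 ∧
      ∀ x, IsLatticePt x → ∃ z : ℤ, lam x = z := by
  obtain ⟨u, hu⟩ := exists_sum_mul_eq_one_of_primitive m hprim
  refine ⟨∑ i, (u i : ℝ) • LinearMap.proj i, ?_, fun x hx => ?_⟩
  · simp only [LinearMap.coe_sum, LinearMap.coe_smul, LinearMap.coe_proj, Finset.sum_apply,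
      Pi.smul_apply, Function.eval, smul_eq_mul]
    exact_mod_cast hu
  · choose v hv using hx
    exact ⟨∑ i, u i * v i, by simp [hv]⟩

theorem Matrix.abs_det_map_intCast_eq_one_of_mul_eq_one {ι : Type*} [Fintype ι] [DecidableEq ι]
    {A B : Matrix ι ι ℤ}
    (h : A.map (Int.cast : ℤ → ℝ) * B.map Int.cast = 1) :
    |(A.map (Int.cast : ℤ → ℝ)).det| = 1 := by
  have hmap : (A * B).map (Int.cast : ℤ → ℝ) = A.map Int.cast * B.map Int.cast := by
    simpa using Matrix.map_mul (L := A) (M := B) (f := Int.castRingHom ℝ)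
  have hAB : A * B = 1 := Matrix.map_injective (f := (Int.cast : ℤ → ℝ)) Int.cast_injective (by
    simp only [hmap, h, Matrix.map_one _ Int.cast_zero Int.cast_one])
  rw [← Int.cast_det, ← Int.cast_abs,
    Int.isUnit_iff_abs_eq.mp (Matrix.isUnit_det_of_right_inverse hAB), Int.cast_one]

theorem LinearMap.abs_det_eq_one_of_image_latticePts {d : ℕ} (f : (Fin d → ℝ) →ₗ[ℝ] (Fin d → ℝ))
    (hf : f '' {x | IsLatticePt x} = {x | IsLatticePt x}) : |LinearMap.det f| = 1 := by
  classical
  have hstd : ∀ j, IsLatticePt (Pi.single j (1 : ℝ) : Fin d → ℝ) := fun j i =>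
    ⟨(Pi.single j (1 : ℤ) : Fin d → ℤ) i, by by_cases h : i = j <;> simp [h]⟩
  choose a ha using fun j : Fin d => hf.le ⟨_, hstd j, rfl⟩
  choose x hx hfx using fun j => hf.ge (hstd j)
  choose b hb using hx
  have hA : LinearMap.toMatrix' f = (Matrix.of fun i j => a j i).map Int.cast := by
    ext i j
    simp [LinearMap.toMatrix'_apply, ha j i]
  have hAB : LinearMap.toMatrix' f * (Matrix.of fun i j => b j i).map Int.cast = 1 := by
    ext i j
    have hcol := congrFun (hfx j) i
    rw [← LinearMap.toMatrix'_mulVec] at hcol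
    simpa [Matrix.mul_apply, Matrix.mulVec, dotProduct, Matrix.one_apply, Pi.single_apply, ← hb,
      eq_comm] using hcol
  rw [← LinearMap.det_toMatrix', hA]
  exact Matrix.abs_det_map_intCast_eq_one_of_mul_eq_one (hA ▸ hAB)

theorem LinearMap.vecCons_image_latticePts {d : ℕ} {m : Fin (d + 1) → ℝ} (hm : IsLatticePt m)
    {lam : (Fin (d + 1) → ℝ) →ₗ[ℝ] ℝ} {π : (Fin (d + 1) → ℝ) →ₗ[ℝ] (Fin d → ℝ)}
    (hlam : ∀ x, IsLatticePt x → ∃ z : ℤ, lam x = z) (hlam_m : lam m = 1) (hπ_m : π m = 0)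
    (hπ : π '' {x | IsLatticePt x} = {y | IsLatticePt y}) :
    lam.vecCons π '' {x | IsLatticePt x} = {x | IsLatticePt x} := by
  apply Subset.antisymm
  · rintro _ ⟨x, hx, rfl⟩ i
    cases i using Fin.cases with
    | zero => simpa using hlam x hx
    | succ j => simpa using hπ.le ⟨x, hx, rfl⟩ j
  · intro w hw
    obtain ⟨x, hx, hπx⟩ := hπ.ge (fun j => hw j.succ : IsLatticePt (Fin.tail w))
    obtain ⟨z, hz⟩ := hlam x hx
    obtain ⟨z₀, hz₀⟩ := hw 0
    refine ⟨x + ((z₀ - z : ℤ) : ℝ) • m, fun i => ?_, ?_⟩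
    · obtain ⟨v, hv⟩ := hx i
      obtain ⟨k, hk⟩ := hm i
      exact ⟨v + (z₀ - z) * k, by simp [hv, hk]⟩
    · funext i
      cases i using Fin.cases with
      | zero => simp [hz, hz₀, hlam_m]
      | succ j => simp [hπ_m, hπx]

theorem volume_image_linearMap_prod {d : ℕ} (lam : (Fin (d + 1) → ℝ) →ₗ[ℝ] ℝ)
    (π : (Fin (d + 1) → ℝ) →ₗ[ℝ] (Fin d → ℝ))
    (h : lam.vecCons π '' {x | IsLatticePt x} = {x | IsLatticePt x})
    (s : Set (Fin (d + 1) → ℝ)) :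
    volume (lam.prod π '' s) = volume s := by
  let e := MeasurableEquiv.piFinSuccAbove (fun _ : Fin (d + 1) => ℝ) 0
  have he : ⇑e ∘ lam.vecCons π = lam.prod π := by
    funext x
    simp [e, MeasurableEquiv.piFinSuccAbove]
  rw [← he, image_comp, e.image_eq_preimage_symm,
    (volume_preserving_piFinSuccAbove (fun _ : Fin (d + 1) => ℝ) 0).symm.measure_preimage_equiv,
    Measure.addHaar_image_linearMap, LinearMap.abs_det_eq_one_of_image_latticePts _ h,
    ENNReal.ofReal_one, one_mul]

theorem Real.volume_Icc_add {a b : ℝ} (hab : a ≤ b) {s : Set ℝ} (hs : IsCompact s)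
    (hsc : Convex ℝ s) (hne : s.Nonempty) :
    volume (Icc a b + s) = volume s + ENNReal.ofReal (b - a) := by
  have hs' := csInf_le_csSup hne hs.bddBelow hs.bddAbove
  rw [eq_Icc_of_connected_compact ⟨hne, hsc.isPreconnected⟩ hs, Icc_add_Icc hab hs',
    Real.volume_Icc, Real.volume_Icc, ← ENNReal.ofReal_add (by linarith) (by linarith)]
  ring_nf

theorem preimage_prodMk_Icc_prod_zero_add {F : Type*} [AddZeroClass F] (a b : ℝ)
    (K : Set (ℝ × F)) (y : F) :
    (fun t => (t, y)) ⁻¹' (Icc a b ×ˢ {0} + K) = Icc a b + (fun t => (t, y)) ⁻¹' K := by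
  ext t
  simp only [mem_preimage, mem_add, mem_prod, mem_singleton_iff, Prod.exists]
  constructor
  · rintro ⟨s, _, ⟨hs, rfl⟩, r, y', hK, hsum⟩
    simp only [Prod.mk_add_mk, zero_add, Prod.mk.injEq] at hsum
    obtain ⟨rfl, rfl⟩ := hsum
    exact ⟨s, hs, r, hK, rfl⟩
  · rintro ⟨s, hs, r, hK, rfl⟩
    exact ⟨s, 0, ⟨hs, rfl⟩, r, y, hK, by simp⟩

theorem isCompact_preimage_prodMk {F : Type*} [TopologicalSpace F] [T2Space F]
    {K : Set (ℝ × F)} (hK : IsCompact K) (y : F) :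
    IsCompact ((fun t => (t, y)) ⁻¹' K) :=
  (hK.image continuous_fst).of_isClosed_subset
    (hK.isClosed.preimage (Continuous.prodMk_left y)) fun _ ht => ⟨_, ht, rfl⟩

theorem convex_preimage_prodMk {F : Type*} [AddCommMonoid F] [Module ℝ F] {K : Set (ℝ × F)}
    (hK : Convex ℝ K) (y : F) :
    Convex ℝ ((fun t => (t, y)) ⁻¹' K) := by
  intro t₁ h₁ t₂ h₂ p q hp hq hpq
  simpa [Convex.combo_self hpq] using hK h₁ h₂ hp hq hpq

theorem measure_Icc_prod_zero_add {F : Type*} [AddCommMonoid F] [Module ℝ F]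
    [TopologicalSpace F] [ContinuousAdd F] [T2Space F] [MeasurableSpace F]
    [OpensMeasurableSpace F] (ν : Measure F) [SFinite ν] {a b : ℝ} (hab : a ≤ b)
    {K : Set (ℝ × F)} (hK : IsCompact K) (hKc : Convex ℝ K) :
    (volume.prod ν) (Icc a b ×ˢ {0} + K)
      = (volume.prod ν) K + ENNReal.ofReal (b - a) * ν (Prod.snd '' K) := by
  have hslice : ∀ y, volume ((fun t => (t, y)) ⁻¹' (Icc a b ×ˢ {0} + K))
      = volume ((fun t => (t, y)) ⁻¹' K)
        + (Prod.snd '' K).indicator (fun _ => ENNReal.ofReal (b - a)) y := by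
    intro y
    rw [preimage_prodMk_Icc_prod_zero_add]
    rcases eq_empty_or_nonempty ((fun t => (t, y)) ⁻¹' K) with hempty | ⟨t, ht⟩
    · have hy : y ∉ Prod.snd '' K := by
        rintro ⟨⟨t, _⟩, ht, rfl⟩
        exact hempty.subset ht
      simp [hempty, hy]
    · have hy : y ∈ Prod.snd '' K := ⟨_, ht, rfl⟩
      rw [indicator_of_mem hy, Real.volume_Icc_add hab
        (isCompact_preimage_prodMk hK y) (convex_preimage_prodMk hKc y) ⟨t, ht⟩]
  have hsum : IsCompact (Icc a b ×ˢ ({0} : Set F) + K) :=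
    (isCompact_Icc.prod isCompact_singleton).add hK
  rw [Measure.prod_apply_symm hsum.measurableSet, Measure.prod_apply_symm hK.measurableSet,
    lintegral_congr hslice, lintegral_add_left ?_, lintegral_indicator_const₀ ?_]
  · exact ((hK.image continuous_snd).measurableSet).nullMeasurableSet
  · exact measurable_measure_prodMk_right (μ := (volume : Measure ℝ)) hK.measurableSet

theorem image_linearMap_prod_segment {E F : Type*} [AddCommGroup E] [Module ℝ E]
    [AddCommGroup F] [Module ℝ F] {lam : E →ₗ[ℝ] ℝ} {π : E →ₗ[ℝ] F} {m : E}
    (hlam_m : lam m = 1) (hπ_m : π m = 0) :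
    lam.prod π '' segment ℝ 0 m = Icc 0 1 ×ˢ {0} := by
  have hm : lam.prod π m = ((1 : ℝ), (0 : F)) := by simp [hlam_m, hπ_m]
  rw [← LinearMap.coe_toAffineMap, image_segment, LinearMap.coe_toAffineMap, map_zero, hm,
    Prod.zero_eq_mk, ← Prod.image_mk_segment_left, segment_eq_Icc zero_le_one, prod_singleton]

theorem volume_segment_add {d : ℕ} {m : Fin (d + 1) → ℝ} {lam : (Fin (d + 1) → ℝ) →ₗ[ℝ] ℝ}
    {π : (Fin (d + 1) → ℝ) →ₗ[ℝ] (Fin d → ℝ)}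
    (h : lam.vecCons π '' {x | IsLatticePt x} = {x | IsLatticePt x})
    (hlam_m : lam m = 1) (hπ_m : π m = 0) {K : Set (Fin (d + 1) → ℝ)} (hK : IsCompact K)
    (hKc : Convex ℝ K) :
    volume (segment ℝ 0 m + K) = volume K + volume (π '' K) := by
  have hΦ := volume_image_linearMap_prod lam π h
  calc volume (segment ℝ 0 m + K)
      = volume (lam.prod π '' (segment ℝ 0 m + K)) := (hΦ _).symm
    _ = (volume.prod volume) (Icc 0 1 ×ˢ {0} + lam.prod π '' K) := by
        rw [image_add, image_linearMap_prod_segment hlam_m hπ_m]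
        rfl
    _ = volume K + volume (π '' K) := by
        rw [measure_Icc_prod_zero_add _ zero_le_one
          (hK.image (lam.prod π).continuous_of_finiteDimensional) (hKc.linear_image _), ← image_comp, sub_zero, ENNReal.ofReal_one, one_mul, ← hΦ K]
        rfl

theorem isCompact_finset_sum {ι M : Type*} [TopologicalSpace M] [AddCommMonoid M]
    [ContinuousAdd M] (s : Finset ι) {t : ι → Set M} (ht : ∀ i ∈ s, IsCompact (t i)) :
    IsCompact (∑ i ∈ s, t i) :=
  Finset.sum_induction _ IsCompact (fun _ _ => IsCompact.add)
    (Set.singleton_zero (α := M) ▸ isCompact_singleton) ht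

theorem Finset.sum_powerset_univ_fin_succ {β : Type*} [AddCommMonoid β] {d : ℕ}
    (f : Finset (Fin (d + 1)) → β) :
    ∑ S ∈ univ.powerset, f S
      = ∑ T ∈ univ.powerset, (f (T.image Fin.succ) + f (insert 0 (T.image Fin.succ))) := by
  have hinj : Set.InjOn (fun T : Finset (Fin d) => T.image Fin.succ)
      (univ.powerset : Finset (Finset (Fin d))) :=
    fun _ _ _ _ h => Finset.image_injective (Fin.succ_injective _) h
  rw [Fin.univ_succ, cons_eq_insert, sum_powerset_insert (by simp), map_eq_image,
    powerset_image, Function.Embedding.coeFn_mk, sum_image hinj, sum_image hinj,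
    ← sum_add_distrib]

theorem mixedVol_eq_sum_powerset {d : ℕ} (μ : Measure (Fin d → ℝ)) [NullSingletonClass μ]
    (Q : Fin d → Set (Fin d → ℝ)) :
    mixedVol μ Q
      = ∑ S ∈ Finset.univ.powerset, (-1 : ℝ) ^ (d - S.card) * (μ (∑ i ∈ S, Q i)).toReal :=
  Finset.sum_erase _ (by simp [← Set.singleton_zero])

theorem mixedVol_cons {d : ℕ} (μ : Measure (Fin (d + 1) → ℝ)) (ν : Measure (Fin d → ℝ))
    [NullSingletonClass μ] [NullSingletonClass ν] (A : Set (Fin (d + 1) → ℝ))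
    (Q : Fin d → Set (Fin (d + 1) → ℝ)) (Q' : Fin d → Set (Fin d → ℝ))
    (h : ∀ T : Finset (Fin d), (μ (A + ∑ i ∈ T, Q i)).toReal
      = (μ (∑ i ∈ T, Q i)).toReal + (ν (∑ i ∈ T, Q' i)).toReal) :
    mixedVol μ (Fin.cons A Q) = mixedVol ν Q' := by
  classical
  rw [mixedVol_eq_sum_powerset, mixedVol_eq_sum_powerset, Finset.sum_powerset_univ_fin_succ]
  refine Finset.sum_congr rfl fun T _ => ?_
  have h0 : (0 : Fin (d + 1)) ∉ T.image Fin.succ := by simp [Fin.succ_ne_zero]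
  have hsum : ∑ i ∈ T.image Fin.succ, (Fin.cons A Q : Fin (d + 1) → Set _) i = ∑ i ∈ T, Q i := by
    rw [Finset.sum_image (Fin.succ_injective _).injOn]
    simp
  have hcard : (T.image Fin.succ).card = T.card :=
    Finset.card_image_of_injective _ (Fin.succ_injective _)
  have hT : T.card ≤ d := by simpa using T.card_le_univ
  rw [Finset.sum_insert h0, Finset.card_insert_of_notMem h0, hsum, hcard, Fin.cons_zero, h T,
    show d + 1 - T.card = d - T.card + 1 by omega, show d + 1 - (T.card + 1) = d - T.card by omega,
    pow_succ]
  ring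

theorem stmt5_general {n : ℕ} (m : Fin (n + 2) → ℤ)
    (hprim : ∀ (k : ℕ) (m' : Fin (n + 2) → ℤ), 2 ≤ k → m ≠ (k : ℤ) • m')
    (π : (Fin (n + 2) → ℝ) →ₗ[ℝ] (Fin (n + 1) → ℝ))
    (hker : LinearMap.ker π = Submodule.span ℝ {fun i => (m i : ℝ)})
    (hlat : π '' {x | IsLatticePt x} = {y | IsLatticePt y})
    (Q : Fin (n + 1) → Set (Fin (n + 2) → ℝ))
    (hQ : ∀ i, ∃ s : Finset (Fin (n + 2) → ℝ), Q i = convexHull ℝ ↑s) :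
    mixedVol volume (Fin.cons (segment ℝ 0 (fun i => (m i : ℝ))) Q)
      = mixedVol volume (fun i => π '' Q i) := by
  obtain ⟨lam, hlam_m, hlam⟩ := exists_linearMap_eq_one_of_primitive m hprim
  have hπ_m : π (fun i => (m i : ℝ)) = 0 :=
    LinearMap.mem_ker.mp (hker ▸ Submodule.mem_span_singleton_self _)
  have hlat_cons := LinearMap.vecCons_image_latticePts (fun i => ⟨m i, rfl⟩) hlam hlam_m hπ_m hlat
  have hQ_compact (T : Finset (Fin (n + 1))) : IsCompact (∑ i ∈ T, Q i) :=
    isCompact_finset_sum T fun i _ => by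
      obtain ⟨s, hs⟩ := hQ i
      exact hs ▸ s.finite_toSet.isCompact_convexHull (𝕜 := ℝ)
  have hQ_convex (T : Finset (Fin (n + 1))) : Convex ℝ (∑ i ∈ T, Q i) :=
    convex_sum _ fun i _ => by
      obtain ⟨s, hs⟩ := hQ i
      exact hs ▸ convex_convexHull ℝ _
  refine mixedVol_cons _ _ _ _ _ fun T => ?_
  rw [← image_finsetSum, volume_segment_add hlat_cons hlam_m hπ_m (hQ_compact T) (hQ_convex T),
    ENNReal.toReal_add (hQ_compact T).measure_lt_top.ne
      ((hQ_compact T).image π.continuous_of_finiteDimensional).measure_lt_top.ne]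

/-- Let `m` be a primitive vector of the rank-`n` lattice `M = ℤ^n` (`n ≥ 2`), and let
`π : M_ℝ → P_ℝ` realize the quotient lattice `P = M/ℤm` (a rank `n−1` lattice): `π` is a
linear map with kernel `ℝm` mapping the lattice `ℤ^n` onto `ℤ^{n−1}`.  For any (nonempty)
polytopes `Q_1,…,Q_{n−1}` in `M_ℝ`:
`MV_M(seg(0,m), Q_1,…,Q_{n−1}) = MV_P(π(Q_1),…,π(Q_{n−1}))`,
both mixed volumes taken with respect to the lattice-normalized Haar measures. -/
theorem stmt5 {n : ℕ} (m : Fin (n + 2) → ℤ) (hm : m ≠ 0)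
    (hprim : ∀ (k : ℕ) (m' : Fin (n + 2) → ℤ), 2 ≤ k → m ≠ (k : ℤ) • m')
    (π : (Fin (n + 2) → ℝ) →ₗ[ℝ] (Fin (n + 1) → ℝ))
    (hker : LinearMap.ker π = Submodule.span ℝ {fun i => (m i : ℝ)})
    (hlat : π '' {x | IsLatticePt x} = {y | IsLatticePt y})
    (Q : Fin (n + 1) → Set (Fin (n + 2) → ℝ))
    (hQ : ∀ i, ∃ s : Finset (Fin (n + 2) → ℝ), Q i = convexHull ℝ ↑s)
    (hQne : ∀ i, (Q i).Nonempty) :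
    mixedVol volume (Fin.cons (segment ℝ 0 (fun i => (m i : ℝ))) Q)
      = mixedVol volume (fun i => π '' Q i) :=
  stmt5_general m hprim π hker hlat Q hQ
end

section
/- For a polytope Q in ℝ^n (n ≥ 2) and the unit vertical segment S = {0}^{n−1} × [0,1], the n-dimensional volume satisfies vol_n(S + Q) − vol_n(Q) = vol_{n−1}(π(Q)), where π : ℝ^n → ℝ^{n−1} is the projection forgetting the last coordinate. -/
/-!
Slice `ℝ^{n+1}` by lines parallel to the segment and integrate slice lengths (Fubini). Every slice
of a compact convex set `Q` is a compact interval, and adding the segment `[a, b]` to a nonempty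
interval lengthens it by exactly `b - a`. The nonempty slices of `Q` lie over `π(Q)`, so
`vol(S + Q) = vol(Q) + (b - a) vol(π(Q))`.
-/

open scoped Pointwise
open MeasureTheory Set

theorem Real.volume_Icc_add_of_isCompact_of_convex {K : Set ℝ} (hK : IsCompact K)
    (hKc : Convex ℝ K) (hKne : K.Nonempty) {a b : ℝ} (hab : a ≤ b) :
    volume (Icc a b + K) = volume K + ENNReal.ofReal (b - a) := by
  have hle : sInf K ≤ sSup K := csInf_le_csSup hKne hK.bddBelow hK.bddAbove
  rw [eq_Icc_of_connected_compact ⟨hKne, hKc.isPreconnected⟩ hK, Icc_add_Icc hab hle,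
    Real.volume_Icc, Real.volume_Icc, ← ENNReal.ofReal_add (by linarith) (by linarith)]
  congr 1
  ring

section CoordSlice

variable {n : ℕ}

def coordSlice (i : Fin (n + 1)) (A : Set (Fin (n + 1) → ℝ)) (y : Fin n → ℝ) : Set ℝ :=
  (fun t => i.insertNth t y) ⁻¹' A

variable {i : Fin (n + 1)} {A : Set (Fin (n + 1) → ℝ)}

theorem volume_eq_lintegral_volume_coordSlice (i : Fin (n + 1)) (hA : MeasurableSet A) :
    volume A = ∫⁻ y, volume (coordSlice i A y) := by
  have e := (volume_preserving_piFinSuccAbove (fun _ : Fin (n + 1) => ℝ) i).symm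
  rw [← e.measure_preimage hA.nullMeasurableSet, Measure.volume_eq_prod,
    Measure.prod_apply_symm (hA.preimage e.measurable)]
  rfl

theorem coordSlice_nonempty_iff {y : Fin n → ℝ} :
    (coordSlice i A y).Nonempty ↔ y ∈ Fin.removeNth i '' A := by
  constructor
  · rintro ⟨t, ht⟩
    exact ⟨_, ht, Fin.removeNth_insertNth (α := fun _ => ℝ) i t y⟩
  · rintro ⟨x, hx, rfl⟩
    exact ⟨x i, by rwa [coordSlice, mem_preimage, Fin.insertNth_self_removeNth]⟩

theorem Convex.coordSlice (hA : Convex ℝ A) (y : Fin n → ℝ) : Convex ℝ (coordSlice i A y) := by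
  let f : ℝ →ᵃ[ℝ] Fin (n + 1) → ℝ :=
    ⟨fun t => i.insertNth t y, LinearMap.single ℝ (fun _ => ℝ) i, fun t s => by
      simp [← Fin.insertNth_zero_right, ← Fin.insertNth_add]⟩
  exact hA.affine_preimage f

theorem IsCompact.coordSlice (hA : IsCompact A) (y : Fin n → ℝ) :
    IsCompact (coordSlice i A y) := by
  have hline : Continuous fun t : ℝ => Fin.insertNth (α := fun _ => ℝ) i t y := by fun_prop
  refine (hA.image (continuous_apply i)).of_isClosed_subset (hA.isClosed.preimage hline) ?_
  rintro t ht
  exact ⟨_, ht, Fin.insertNth_apply_same (α := fun _ => ℝ) i t y⟩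

theorem coordSlice_image_single_add (I : Set ℝ) (y : Fin n → ℝ) :
    coordSlice i (Pi.single i '' I + A) y = I + coordSlice i A y := by
  have hsplit (s t : ℝ) :
      Fin.insertNth (α := fun _ => ℝ) i s y = Pi.single i t + i.insertNth (s - t) y := by
    rw [← Fin.insertNth_zero_right, ← Fin.insertNth_add, add_sub_cancel, zero_add]
  ext s
  simp only [coordSlice, mem_preimage, mem_add, mem_image]
  constructor
  · rintro ⟨_, ⟨t, ht, rfl⟩, q, hq, hsum⟩
    obtain rfl : q = i.insertNth (s - t) y := add_left_cancel (hsum.trans (hsplit s t))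
    exact ⟨t, ht, s - t, hq, add_sub_cancel t s⟩
  · rintro ⟨t, ht, r, hr, rfl⟩
    exact ⟨_, ⟨t, ht, rfl⟩, _, hr, by rw [hsplit (t + r) t, add_sub_cancel_left]⟩

end CoordSlice

theorem image_single_eq_setOf {n : ℕ} {α : Type*} [Zero α] (i : Fin (n + 1)) (I : Set α) :
    Pi.single (M := fun _ => α) i '' I =
      {x : Fin (n + 1) → α | Fin.removeNth i x = 0 ∧ x i ∈ I} := by
  ext x
  constructor
  · rintro ⟨t, ht, rfl⟩
    exact ⟨by rw [← Fin.insertNth_zero_right, Fin.removeNth_insertNth], by simpa⟩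
  · rintro ⟨h0, hI⟩
    exact ⟨x i, hI, by rw [← Fin.insertNth_zero_right, ← h0, Fin.insertNth_self_removeNth]⟩

theorem IsCompact.image_removeNth {n : ℕ} {α : Type*} [TopologicalSpace α]
    {A : Set (Fin (n + 1) → α)} (hA : IsCompact A) (i : Fin (n + 1)) :
    IsCompact (Fin.removeNth i '' A) :=
  hA.image (continuous_pi fun _ => continuous_apply _)

theorem volume_image_single_Icc_add {n : ℕ} {i : Fin (n + 1)} {A : Set (Fin (n + 1) → ℝ)}
    (hA : IsCompact A) (hAc : Convex ℝ A) {a b : ℝ} (hab : a ≤ b) :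
    volume (Pi.single i '' Icc a b + A)
      = volume A + ENNReal.ofReal (b - a) * volume (Fin.removeNth i '' A) := by
  have hS : IsCompact (Pi.single (M := fun _ => ℝ) i '' Icc a b) :=
    isCompact_Icc.image (continuous_single (A := fun _ => ℝ) i)
  have hπA : MeasurableSet (Fin.removeNth i '' A) :=
    (hA.image_removeNth i).isClosed.measurableSet
  have hslice (y : Fin n → ℝ) : volume (coordSlice i (Pi.single i '' Icc a b + A) y)
      = volume (coordSlice i A y)
        + (Fin.removeNth i '' A).indicator (fun _ => ENNReal.ofReal (b - a)) y := by
    rw [coordSlice_image_single_add]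
    by_cases hy : y ∈ Fin.removeNth i '' A
    · rw [indicator_of_mem hy]
      exact Real.volume_Icc_add_of_isCompact_of_convex (hA.coordSlice y) (hAc.coordSlice y)
        (coordSlice_nonempty_iff.mpr hy) hab
    · rw [indicator_of_notMem hy,
        not_nonempty_iff_eq_empty.mp (mt coordSlice_nonempty_iff.mp hy)]
      simp
  rw [volume_eq_lintegral_volume_coordSlice i (hS.add hA).isClosed.measurableSet,
    lintegral_congr hslice, lintegral_add_right _ (measurable_const.indicator hπA),
    ← volume_eq_lintegral_volume_coordSlice i hA.isClosed.measurableSet,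
    lintegral_indicator_const hπA]

theorem stmt6_general {n : ℕ} (Q : Set (Fin (n + 1) → ℝ))
    (hQ : ∃ s : Finset (Fin (n + 1) → ℝ), Q = convexHull ℝ ↑s) :
    (volume ({x : Fin (n + 1) → ℝ |
          (∀ i : Fin n, x i.castSucc = 0) ∧ x (Fin.last n) ∈ Set.Icc (0 : ℝ) 1} + Q)).toReal
        - (volume Q).toReal
      = (volume ((fun (x : Fin (n + 1) → ℝ) (i : Fin n) => x i.castSucc) '' Q)).toReal := by
  obtain ⟨s, rfl⟩ := hQ
  have hQ : IsCompact (convexHull ℝ (s : Set (Fin (n + 1) → ℝ))) :=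
    s.finite_toSet.isCompact_convexHull ℝ
  have hS : {x : Fin (n + 1) → ℝ | (∀ i : Fin n, x i.castSucc = 0) ∧ x (Fin.last n) ∈ Icc 0 1}
      = Pi.single (Fin.last n) '' Icc 0 1 := by
    simp only [image_single_eq_setOf, Fin.removeNth_last, funext_iff, Fin.init, Pi.zero_apply]
  have hπ : (fun (x : Fin (n + 1) → ℝ) (i : Fin n) => x i.castSucc)
      = Fin.removeNth (Fin.last n) := by
    funext x
    rw [Fin.removeNth_last]
    rfl
  rw [hS, hπ, volume_image_single_Icc_add hQ (convex_convexHull ℝ _) zero_le_one,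
    ENNReal.toReal_add hQ.measure_ne_top
      (ENNReal.mul_ne_top ENNReal.ofReal_ne_top (hQ.image_removeNth _).measure_ne_top)]
  simp

/-- For a (nonempty) polytope `Q` in `ℝ^n` with `n ≥ 2`, and the unit vertical segment
`S = {0}^{n−1} × [0,1]`, one has `vol_n(S + Q) − vol_n(Q) = vol_{n−1}(π(Q))` where
`π : ℝ^n → ℝ^{n−1}` forgets the last coordinate.  (Here `ℝ^n` is modelled as
`Fin (n+1) → ℝ` with `n ≥ 1`, so the ambient dimension is at least `2`.) -/
theorem stmt6 {n : ℕ} (hn : 1 ≤ n) (Q : Set (Fin (n + 1) → ℝ))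
    (hQ : ∃ s : Finset (Fin (n + 1) → ℝ), Q = convexHull ℝ ↑s) (hQne : Q.Nonempty) :
    (volume ({x : Fin (n + 1) → ℝ |
          (∀ i : Fin n, x i.castSucc = 0) ∧ x (Fin.last n) ∈ Set.Icc (0 : ℝ) 1} + Q)).toReal
        - (volume Q).toReal
      = (volume ((fun (x : Fin (n + 1) → ℝ) (i : Fin n) => x i.castSucc) '' Q)).toReal :=
  stmt6_general Q hQ
end

section
/- Over an archimedean field (ℂ with the usual absolute value), the only boundary of the tropical fiber trop^{−1}(u) ⊆ (ℂ*)^n is trop^{−1}(u) itself: for every point z̃ of the real torus {z : −log|z_i| = u_i for all i}, there exists a polynomial f (namely f = ∏_i (T_i + z̃_i)) such that |f(z)| attains its maximum on trop^{−1}(u) exactly at z = z̃. -/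
open scoped BigOperators

/-- The point `z̃ = (e^{−u_1+iθ_1},…,e^{−u_n+iθ_n})` of the tropical fiber `trop⁻¹(u)`. -/
noncomputable def ztilde {n : ℕ} (u θ : Fin n → ℝ) : Fin n → ℂ :=
  fun i => Complex.exp (-(u i : ℂ) + (θ i : ℂ) * Complex.I)

/-! Each factor `|z_i + z̃_i|` is at most `|z_i| + |z̃_i| = |2 z̃_i|`, so the product is
maximised at `z = z̃`. At a maximum every factor must be maximal, since the factors of the
bound are nonzero; and `|z_i + z̃_i| = |z_i| + |z̃_i|` with `|z_i| = |z̃_i|` forces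
`z_i = z̃_i` because `ℂ` is strictly convex. -/

namespace Finset

variable {ι R : Type*} [CommSemiring R] [PartialOrder R] [IsStrictOrderedRing R]
  {s : Finset ι} {f g : ι → R}

lemma prod_lt_prod_of_nonneg (hf : ∀ i ∈ s, 0 ≤ f i) (hg : ∀ i ∈ s, 0 < g i)
    (hfg : ∀ i ∈ s, f i ≤ g i) (hlt : ∃ i ∈ s, f i < g i) :
    ∏ i ∈ s, f i < ∏ i ∈ s, g i := by
  classical
  obtain ⟨j, hj, hfgj⟩ := hlt
  rw [← mul_prod_erase s f hj, ← mul_prod_erase s g hj]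
  calc f j * ∏ i ∈ s.erase j, f i
      ≤ f j * ∏ i ∈ s.erase j, g i :=
        mul_le_mul_of_nonneg_left
          (prod_le_prod (fun i hi ↦ hf i (mem_of_mem_erase hi))
            fun i hi ↦ hfg i (mem_of_mem_erase hi)) (hf j hj)
    _ < g j * ∏ i ∈ s.erase j, g i :=
        mul_lt_mul_of_pos_right hfgj (prod_pos fun i hi ↦ hg i (mem_of_mem_erase hi))

lemma prod_eq_prod_iff_of_le_of_nonneg (hf : ∀ i ∈ s, 0 ≤ f i) (hg : ∀ i ∈ s, 0 < g i)
    (hfg : ∀ i ∈ s, f i ≤ g i) :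
    ∏ i ∈ s, f i = ∏ i ∈ s, g i ↔ ∀ i ∈ s, f i = g i := by
  refine ⟨fun h ↦ ?_, prod_congr rfl⟩
  by_contra! hne
  obtain ⟨i, hi, hfgi⟩ := hne
  exact (prod_lt_prod_of_nonneg hf hg hfg ⟨i, hi, (hfg i hi).lt_of_ne hfgi⟩).ne h

end Finset

section NormAddSelf

variable {E : Type*} [SeminormedAddCommGroup E] [NormedSpace ℝ E] {x y : E}

lemma norm_add_self (y : E) : ‖y + y‖ = ‖y‖ + ‖y‖ :=
  (SameRay.refl y).norm_add

lemma norm_add_le_norm_add_self (h : ‖x‖ = ‖y‖) : ‖x + y‖ ≤ ‖y + y‖ := by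
  simpa only [norm_add_self, h] using norm_add_le x y

end NormAddSelf

lemma eq_of_norm_add_eq_norm_add_self {E : Type*} [NormedAddCommGroup E] [NormedSpace ℝ E]
    [StrictConvexSpace ℝ E] {x y : E} (h : ‖x‖ = ‖y‖) (hadd : ‖x + y‖ = ‖y + y‖) : x = y :=
  eq_of_norm_eq_of_norm_add_eq h (by rw [hadd, norm_add_self, h])

/-- In the archimedean case the only boundary of the tropical fiber
`trop⁻¹(u) = {z ∈ (ℂ*)^n : |z_i| = e^{−u_i}}` is the whole fiber: for every point
`z̃ = (e^{−u_1+iθ_1},…,e^{−u_n+iθ_n})` of the fiber there is a polynomial — namely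
`f = ∏_i (T_i + z̃_i)` — such that `|f(z)|` on the fiber attains its maximum exactly at
`z = z̃`. -/
theorem stmt9 {n : ℕ} (u θ : Fin n → ℝ) :
    ∀ z : Fin n → ℂ, (∀ i, ‖z i‖ = Real.exp (-(u i))) →
      ‖∏ i, (z i + ztilde u θ i)‖
          ≤ ‖∏ i, (ztilde u θ i + ztilde u θ i)‖ ∧
        (‖∏ i, (z i + ztilde u θ i)‖
            = ‖∏ i, (ztilde u θ i + ztilde u θ i)‖ → z = ztilde u θ) := by
  intro z hz
  have hnorm : ∀ i, ‖z i‖ = ‖ztilde u θ i‖ := by simp [ztilde, Complex.norm_exp, hz]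
  have hle : ∀ i ∈ Finset.univ, ‖z i + ztilde u θ i‖ ≤ ‖ztilde u θ i + ztilde u θ i‖ :=
    fun i _ ↦ norm_add_le_norm_add_self (hnorm i)
  have hpos : ∀ i ∈ Finset.univ, 0 < ‖ztilde u θ i + ztilde u θ i‖ := by
    simp [← two_mul, ztilde, Complex.exp_ne_zero]
  rw [norm_prod, norm_prod]
  refine ⟨Finset.prod_le_prod (fun i _ ↦ norm_nonneg _) hle, fun heq ↦ funext fun i ↦ ?_⟩
  have hfactor := (Finset.prod_eq_prod_iff_of_le_of_nonneg (fun i _ ↦ norm_nonneg _) hpos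
    hle).1 heq i (Finset.mem_univ i)
  exact eq_of_norm_add_eq_norm_add_self (hnorm i) hfactor
end
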